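/- arXiv:1405.5445 — 2 statements merged into one kernel-verified Lean document; each statement's English description precedes it below -/
import Mathlib

section
/- Let T, δ > 0, C > 1 and ε > 0 with arctan(2ε/(1 - 1/C²)) ≤ π/2. If s ∈ ℂ satisfies |s - 1/2 - iT| ≤ δ/C and 0 < 1/2 - Re s ≤ εδ, then ∫_{T-δ}^{T+δ} (1 - 2 Re s)/((Re s - 1/2)² + (t - Im s)²) dt ≥ π. -/
/-!
With `σ = 1/2 - Re s > 0`, the integrand is `2σ / (σ² + (t - Im s)²)`, and
`∫ t in a..b, σ / (σ² + (t - m)²)` is the angle under which the segment `[a, b]` of the real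
axis is seen from the point `m + iσ`. The hypothesis on `s` puts `Im s + iσ` inside the disc with
diameter `[T - δ, T + δ]`, so by Thales' theorem this angle is at least a right angle.
-/

open Real

theorem pi_div_two_le_arctan_add_arctan {x y : ℝ} (hx : 0 < x) (hxy : 1 ≤ x * y) :
    π / 2 ≤ arctan x + arctan y := by
  have hy : x⁻¹ ≤ y := by rwa [inv_le_iff_one_le_mul₀' hx]
  linarith [arctan_inv_of_pos hx, arctan_strictMono.monotone hy]

theorem pi_div_two_le_integral_div_sq_add_sq {σ m c r : ℝ} (hσ : 0 < σ) (hr : 0 ≤ r)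
    (h : σ ^ 2 + (m - c) ^ 2 ≤ r ^ 2) :
    π / 2 ≤ ∫ t in (c - r)..(c + r), σ / (σ ^ 2 + (t - m) ^ 2) := by
  have hmc : |m - c| < r := abs_lt_of_sq_lt_sq (by nlinarith) hr
  have hright : 0 < (c + r - m) / σ := div_pos (by linarith [le_abs_self (m - c)]) hσ
  have hprod : 1 ≤ (c + r - m) / σ * ((m - (c - r)) / σ) := by
    rw [div_mul_div_comm, one_le_div (by positivity)]
    nlinarith
  calc π / 2 ≤ arctan ((c + r - m) / σ) + arctan ((m - (c - r)) / σ) :=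
        pi_div_two_le_arctan_add_arctan hright hprod
    _ = ∫ t in (c - r)..(c + r), σ / (σ ^ 2 + (t - m) ^ 2) := by
        rw [intervalIntegral.integral_comp_sub_right (fun x => σ / (σ ^ 2 + x ^ 2)),
          integral_div_sq_add_sq, show c - r - m = -(m - (c - r)) by ring, neg_div, arctan_neg,
          sub_neg_eq_add]

open Complex

theorem integral_box_ge_pi_general (T δ C : ℝ) (hδ : 0 < δ) (hC : 1 < C)
    (s : ℂ) (hs : ‖s - 1/2 - Complex.I * T‖ ≤ δ / C)
    (hre1 : 0 < 1/2 - s.re) :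
    Real.pi ≤ ∫ t in (T - δ)..(T + δ), (1 - 2 * s.re) / ((s.re - 1/2) ^ 2 + (t - s.im) ^ 2) := by
  set σ := 1 / 2 - s.re
  have hdisc : σ ^ 2 + (s.im - T) ^ 2 ≤ δ ^ 2 := calc
    σ ^ 2 + (s.im - T) ^ 2 = ‖s - 1/2 - I * T‖ ^ 2 := by
      simp only [Complex.sq_norm, normSq_apply, sub_re, sub_im, mul_re, mul_im, I_re, I_im,
        ofReal_re, ofReal_im, one_div, inv_re, inv_im, re_ofNat, im_ofNat, σ]
      ring
    _ ≤ δ ^ 2 := pow_le_pow_left₀ (norm_nonneg _) (hs.trans (div_le_self hδ.le hC.le)) 2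
  have hintegrand (t : ℝ) : (1 - 2 * s.re) / ((s.re - 1/2) ^ 2 + (t - s.im) ^ 2)
      = 2 * (σ / (σ ^ 2 + (t - s.im) ^ 2)) := by
    ring
  rw [intervalIntegral.integral_congr fun t _ => hintegrand t, intervalIntegral.integral_const_mul]
  linarith [pi_div_two_le_integral_div_sq_add_sq hre1 hδ.le hdisc]

theorem integral_box_ge_pi (T δ C ε : ℝ) (hT : 0 < T) (hδ : 0 < δ) (hC : 1 < C) (hε : 0 < ε)
    (hεsmall : Real.arctan (2 * ε / (1 - 1 / C ^ 2)) ≤ Real.pi / 2)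
    (s : ℂ) (hs : ‖s - 1/2 - Complex.I * T‖ ≤ δ / C)
    (hre1 : 0 < 1/2 - s.re) (hre2 : 1/2 - s.re ≤ ε * δ) :
    Real.pi ≤ ∫ t in (T - δ)..(T + δ), (1 - 2 * s.re) / ((s.re - 1/2) ^ 2 + (t - s.im) ^ 2) :=
  integral_box_ge_pi_general T δ C hδ hC s hs hre1
end

section
/- Let n : ℕ → ℝ be a non-decreasing nonnegative function such that the series ∑_{k=1}^∞ n(k) (1/k^{3/2} - 1/(k+1)^{3/2}) converges. Then n(k) = o(k^{3/2}) as k → ∞. -/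
/-!
Write `g k = k^(-3/2)` and `a k = n k * (g k - g (k + 1))`. Since `n` is non-decreasing and
`g` decreases to `0`, telescoping gives `n m * g m ≤ ∑_{k ≥ m} a k`, the tail of a convergent
series, while `n m * g m ≥ n 0 * g m → 0`. Because `0 ^ (3/2) = 0`, the index `0` is dropped by
shifting the sequences by one.
-/

open Real Filter Topology

theorem Antitone.hasSum_sub_succ {g : ℕ → ℝ} (hg : Antitone g)
    (hg0 : Tendsto g atTop (𝓝 0)) :
    HasSum (fun k => g k - g (k + 1)) (g 0) := by
  rw [hasSum_iff_tendsto_nat_of_nonneg fun k => sub_nonneg.2 (hg k.le_succ)]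
  simp_rw [Finset.sum_range_sub']
  simpa using tendsto_const_nhds.sub hg0

theorem Monotone.mul_le_tsum_mul_sub_succ {n g : ℕ → ℝ} (hn : Monotone n) (hg : Antitone g)
    (hg0 : Tendsto g atTop (𝓝 0)) (hsum : Summable fun k => n k * (g k - g (k + 1))) (m : ℕ) :
    n m * g m ≤ ∑' k, n (k + m) * (g (k + m) - g (k + m + 1)) := by
  have htel : HasSum (fun k => n m * (g (k + m) - g (k + m + 1))) (n m * g m) := by
    simpa [add_right_comm] using
      ((hg.comp_monotone fun _ _ h => Nat.add_le_add_right h m).hasSum_sub_succ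
        (hg0.comp (tendsto_add_atTop_nat m))).mul_left (n m)
  refine htel.tsum_eq ▸ htel.summable.tsum_le_tsum (fun k => ?_) ((summable_nat_add_iff m).2 hsum)
  exact mul_le_mul_of_nonneg_right (hn (Nat.le_add_left m k)) (sub_nonneg.2 (hg (Nat.le_succ _)))

theorem Monotone.tendsto_mul_of_summable_mul_sub_succ {n g : ℕ → ℝ} (hn : Monotone n)
    (hg : Antitone g) (hg0 : Tendsto g atTop (𝓝 0))
    (hsum : Summable fun k => n k * (g k - g (k + 1))) :
    Tendsto (fun k => n k * g k) atTop (𝓝 0) := by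
  have hlower : Tendsto (fun k => n 0 * g k) atTop (𝓝 0) := by simpa using hg0.const_mul (n 0)
  refine tendsto_of_tendsto_of_tendsto_of_le_of_le hlower
    (tendsto_sum_nat_add fun k => n k * (g k - g (k + 1)))
    (fun k => ?_) (hn.mul_le_tsum_mul_sub_succ hg hg0 hsum ·)
  exact mul_le_mul_of_nonneg_right (hn k.zero_le) (hg.le_of_tendsto hg0 k)

theorem antitone_one_div_add_one_rpow {p : ℝ} (hp : 0 ≤ p) :
    Antitone fun k : ℕ => 1 / ((k : ℝ) + 1) ^ p := fun k l hkl =>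
  one_div_le_one_div_of_le (by positivity) (rpow_le_rpow (by positivity) (by gcongr) hp)

theorem tendsto_one_div_add_one_rpow {p : ℝ} (hp : 0 < p) :
    Tendsto (fun k : ℕ => 1 / ((k : ℝ) + 1) ^ p) atTop (𝓝 0) := by
  simpa [Pi.inv_def] using ((tendsto_rpow_atTop hp).comp
    (tendsto_atTop_add_const_right _ 1 tendsto_natCast_atTop_atTop)).inv_tendsto_atTop

theorem counting_little_o_general (n : ℕ → ℝ) (hmono : Monotone n)
    (hsum : Summable (fun k : ℕ =>
      n k * (1 / (k : ℝ) ^ ((3:ℝ)/2) - 1 / ((k : ℝ) + 1) ^ ((3:ℝ)/2)))) :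
    Filter.Tendsto (fun k : ℕ => n k / (k : ℝ) ^ ((3:ℝ)/2)) Filter.atTop (nhds 0) := by
  have hmono' : Monotone fun k => n (k + 1) := fun _ _ h => hmono (Nat.add_le_add_right h 1)
  have hshift := hmono'.tendsto_mul_of_summable_mul_sub_succ
    (antitone_one_div_add_one_rpow (p := 3 / 2) (by norm_num))
    (tendsto_one_div_add_one_rpow (by norm_num))
    (by simpa using (summable_nat_add_iff 1).2 hsum)
  rw [← tendsto_add_atTop_iff_nat 1]
  simp only [mul_one_div] at hshift
  simpa using hshift

theorem counting_little_o (n : ℕ → ℝ) (hmono : Monotone n) (hnonneg : ∀ k, 0 ≤ n k)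
    (hsum : Summable (fun k : ℕ =>
      n k * (1 / (k : ℝ) ^ ((3:ℝ)/2) - 1 / ((k : ℝ) + 1) ^ ((3:ℝ)/2)))) :
    Filter.Tendsto (fun k : ℕ => n k / (k : ℝ) ^ ((3:ℝ)/2)) Filter.atTop (nhds 0) :=
  counting_little_o_general n hmono hsum
end
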